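/- arXiv:2208.04490 — 3 statements merged into one kernel-verified Lean document; each statement's English description precedes it below -/
import Mathlib

section
/- Suppose F(z) has a power series expansion at the origin with only finitely many negative coefficients, converging in a neighborhood of the origin. If y ∈ (C^*)^d is a minimal point of the zero set of the denominator H (i.e., H(y) = 0 and no zero of H is coordinate-wise strictly smaller in modulus), then (|y_1|, ..., |y_d|) is also a zero of H and is also a minimal point. -/
/-!
Suppose `H (|y|) ≠ 0`. Along a complex line `t ↦ t • v` the expansion of `F` regroups into a
one-variable series `∑ aₙ(v) tⁿ`; when `|vⱼ| = |yⱼ|` for all `j`, minimality of `y` keeps the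
zeros of `H (t • v)` outside the unit disc, so this series converges to `F (t • v)` for `|t| < 1`.
For `v = |y|` the coefficients are real and eventually nonnegative, and `F (s • |y|)` stays bounded
for `s ∈ [0, 1]` because `H (|y|) ≠ 0`; hence `∑ aₙ(|y|)` converges. From some degree on it
dominates `∑ |aₙ(y)|`, so `F (s • y)` stays bounded as `s → 1⁻`. Since `H (y) = 0`, this forces
`G (y) = 0`, contradicting coprimality.
-/

open MvPolynomial Filter Topology Finset Metric Asymptotics

section LineCoeff

variable {σ : Type*} [Fintype σ] [DecidableEq σ]

/-- The coefficient of `t ^ n` in `∑ i, c i * (t • v) ^ i`. -/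
noncomputable def lineCoeff {R : Type*} [CommSemiring R] (c : (σ →₀ ℕ) → R) (v : σ → R)
    (n : ℕ) : R :=
  ∑ i ∈ finsuppAntidiag univ n, c i * ∏ j, v j ^ i j

theorem map_lineCoeff {R S : Type*} [CommSemiring R] [CommSemiring S] (φ : R →+* S)
    (c : (σ →₀ ℕ) → R) (v : σ → R) (n : ℕ) :
    φ (lineCoeff c v n) = lineCoeff (φ ∘ c) (φ ∘ v) n := by
  simp [lineCoeff]

theorem norm_lineCoeff_le {𝕜 : Type*} [NormedField 𝕜] (c : (σ →₀ ℕ) → 𝕜) (v : σ → 𝕜)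
    (n : ℕ) : ‖lineCoeff c v n‖ ≤ lineCoeff (‖c ·‖) (‖v ·‖) n :=
  (norm_sum_le _ _).trans_eq <| by simp [lineCoeff, norm_prod]

theorem HasSum.lineCoeff_mul_pow {R : Type*} [NormedCommRing R] [CompleteSpace R]
    {c : (σ →₀ ℕ) → R} {v : σ → R} {t a : R} (h : HasSum (fun i => c i * ∏ j, (t * v j) ^ i j) a) :
    HasSum (fun n => lineCoeff c v n * t ^ n) a := by
  have hfiber (n : ℕ) : (Finsupp.degree : (σ →₀ ℕ) → ℕ) ⁻¹' {n} =
      ((finsuppAntidiag univ n : Finset (σ →₀ ℕ)) : Set (σ →₀ ℕ)) := by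
    ext i
    simp [Finsupp.degree_eq_sum]
  have hgroup (n : ℕ) : lineCoeff c v n * t ^ n =
      ∑' i : (Finsupp.degree : (σ →₀ ℕ) → ℕ) ⁻¹' {n}, c i * ∏ j, (t * v j) ^ i.1 j := by
    rw [hfiber, Finset.tsum_subtype' _ fun i => c i * ∏ j, (t * v j) ^ i j, lineCoeff, sum_mul]
    refine sum_congr rfl fun i hi => ?_
    rw [mem_finsuppAntidiag] at hi
    simp only [mul_pow, prod_mul_distrib, prod_pow_eq_pow_sum, hi.1]
    ring
  simpa only [hgroup] using h.tsum_fiberwise Finsupp.degree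

end LineCoeff

theorem hasSum_mul_pow_of_differentiableOn_ball {F : ℂ → ℂ} {a : ℕ → ℂ} {R : ℝ}
    (hF : DifferentiableOn ℂ F (ball 0 R))
    (h0 : ∀ᶠ t in 𝓝 0, HasSum (fun n => a n * t ^ n) (F t)) {t : ℂ} (ht : ‖t‖ < R) :
    HasSum (fun n => a n * t ^ n) (F t) := by
  obtain ⟨R', htR', hR'R⟩ := exists_between ht
  lift R' to NNReal using (norm_nonneg t).trans htR'.le
  have hR' : HasFPowerSeriesOnBall F (cauchyPowerSeries F 0 R') 0 R' :=
    (hF.mono (closedBall_subset_ball hR'R)).hasFPowerSeriesOnBall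
      (NNReal.coe_pos.1 ((norm_nonneg t).trans_lt htR'))
  have ha : HasFPowerSeriesAt F (FormalMultilinearSeries.ofScalars ℂ a) 0 := by
    rw [hasFPowerSeriesAt_iff]
    simpa only [FormalMultilinearSeries.coeff_ofScalars, smul_eq_mul, zero_add, mul_comm]
      using h0
  have hsum := hR'.hasSum (y := t) (by simpa [edist_zero_right] using htR')
  rw [hR'.hasFPowerSeriesAt.eq_formalMultilinearSeries ha] at hsum
  simpa [FormalMultilinearSeries.ofScalars_apply_eq, mul_comm] using hsum

/-- The partial sums are the limits of `∑ n < m, bₙ sⁿ` as `s → 1⁻`, and once `m ≥ N` these stay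
below `φ s` because the remaining terms are nonnegative. -/
theorem summable_of_hasSum_mul_pow_le {b : ℕ → ℝ} {φ : ℝ → ℝ} {M : ℝ} {N : ℕ}
    (hb : ∀ n, N ≤ n → 0 ≤ b n)
    (hφ : ∀ s ∈ Set.Ioo (0 : ℝ) 1, HasSum (fun n => b n * s ^ n) (φ s))
    (hM : ∀ s ∈ Set.Ioo (0 : ℝ) 1, φ s ≤ M) : Summable b := by
  have hpartial : ∀ m, N ≤ m → ∑ n ∈ range m, b n ≤ M := by
    intro m hm
    have hlim : Tendsto (fun s : ℝ => ∑ n ∈ range m, b n * s ^ n) (𝓝[<] 1)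
        (𝓝 (∑ n ∈ range m, b n)) := by
      have := (continuous_finsetSum (range m) (f := fun n (s : ℝ) => b n * s ^ n) fun n _ =>
        continuous_const.mul (continuous_pow n)).tendsto 1
      simpa using this.mono_left nhdsWithin_le_nhds
    refine le_of_tendsto hlim ?_
    filter_upwards [Ioo_mem_nhdsLT zero_lt_one] with s hs
    refine (sum_le_hasSum _ (fun n hn => ?_) (hφ s hs)).trans (hM s hs)
    exact mul_nonneg (hb n (by simp only [mem_range, not_lt] at hn; omega)) (pow_nonneg hs.1.le n)
  rw [← summable_nat_add_iff N]
  refine summable_of_sum_range_le (c := M - ∑ n ∈ range N, b n)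
    (fun n => hb _ (Nat.le_add_left N n)) fun m => ?_
  have := hpartial (N + m) (Nat.le_add_right N m)
  rw [sum_range_add] at this
  simp only [add_comm _ N]
  linarith

theorem norm_le_tsum_norm_of_hasSum_mul_pow {𝕜 : Type*} [NormedField 𝕜] {a : ℕ → 𝕜} {t x : 𝕜}
    (ha : Summable (‖a ·‖)) (ht : ‖t‖ ≤ 1) (hx : HasSum (fun n => a n * t ^ n) x) :
    ‖x‖ ≤ ∑' n, ‖a n‖ :=
  hx.norm_le_of_bounded ha.hasSum fun n => by
    rw [norm_mul, norm_pow]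
    exact mul_le_of_le_one_right (norm_nonneg _) (pow_le_one₀ (norm_nonneg t) ht)

theorem eq_zero_of_tendsto_of_norm_div_le {α 𝕜 : Type*} [NormedField 𝕜] {l : Filter α} [l.NeBot]
    {g h : α → 𝕜} {x : 𝕜} {C : ℝ} (hg : Tendsto g l (𝓝 x)) (hh : Tendsto h l (𝓝 0))
    (hbound : ∀ᶠ s in l, h s ≠ 0 ∧ ‖g s / h s‖ ≤ C) : x = 0 := by
  have hgh : g =O[l] h := IsBigO.of_bound C <| hbound.mono fun s ⟨hs, hle⟩ => by
    rwa [norm_div, div_le_iff₀ (norm_pos_iff.2 hs)] at hle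
  exact tendsto_nhds_unique hg (hgh.trans_tendsto hh)

theorem exists_nonneg_of_le_degree {σ : Type*} {f : (σ →₀ ℕ) → ℝ} (hf : {i | f i < 0}.Finite) :
    ∃ N, ∀ i, N ≤ Finsupp.degree i → 0 ≤ f i := by
  obtain ⟨N, hN⟩ := (hf.image Finsupp.degree).bddAbove
  refine ⟨N + 1, fun i hi => not_lt.1 fun hneg => ?_⟩
  have := hN ⟨i, hneg, rfl⟩
  omega

theorem differentiable_eval_smul {σ : Type*} (P : MvPolynomial σ ℂ) (v : σ → ℂ) :
    Differentiable ℂ fun t : ℂ => eval (t • v) P := fun t => by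
  simpa using
    (AnalyticAt.aeval_mvPolynomial (f := fun t : ℂ => t • v) (z := t)
      (fun j => analyticAt_id.mul analyticAt_const) P).differentiableAt

theorem tendsto_eval_ofReal_smul {σ : Type*} (P : MvPolynomial σ ℂ) (v : σ → ℂ) :
    Tendsto (fun s : ℝ => eval ((s : ℂ) • v) P) (𝓝[<] 1) (𝓝 (eval v P)) := by
  have hcont : Continuous fun s : ℝ => eval ((s : ℂ) • v) P :=
    (differentiable_eval_smul P v).continuous.comp Complex.continuous_ofReal
  have := hcont.tendsto 1
  rw [Complex.ofReal_one, one_smul] at this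
  exact this.mono_left nhdsWithin_le_nhds

section LineRestriction

variable {σ : Type*} [Fintype σ] [DecidableEq σ] {G H : MvPolynomial σ ℂ} {ε : ℝ}

theorem hasSum_lineCoeff_of_eval_ne_zero {c : (σ →₀ ℕ) → ℂ} (hε : 0 < ε)
    (hconv : ∀ z : σ → ℂ, (∀ j, ‖z j‖ < ε) →
      HasSum (fun i => c i * ∏ j, z j ^ i j) (eval z G / eval z H))
    {v : σ → ℂ} (hv : ∀ t : ℂ, ‖t‖ < 1 → eval (t • v) H ≠ 0) {t : ℂ} (ht : ‖t‖ < 1) :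
    HasSum (fun n => lineCoeff c v n * t ^ n) (eval (t • v) G / eval (t • v) H) := by
  refine hasSum_mul_pow_of_differentiableOn_ball
    (F := fun t => eval (t • v) G / eval (t • v) H) ?_ ?_ ht
  · exact (differentiable_eval_smul G v).differentiableOn.div
      (differentiable_eval_smul H v).differentiableOn fun t ht => hv t (by simpa using ht)
  · have hsmall : ∀ᶠ t : ℂ in 𝓝 0, ∀ j, ‖t * v j‖ < ε := eventually_all.2 fun j =>
      ((continuous_id.mul continuous_const).norm.tendsto' 0 0 (by simp)).eventually
        (gt_mem_nhds hε)
    filter_upwards [hsmall] with t ht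
    exact (hconv (t • v) ht).lineCoeff_mul_pow

theorem summable_lineCoeff_of_eval_ne_zero {f : (σ →₀ ℕ) → ℝ} (hε : 0 < ε)
    (hconv : ∀ z : σ → ℂ, (∀ j, ‖z j‖ < ε) →
      HasSum (fun i => (f i : ℂ) * ∏ j, z j ^ i j) (eval z G / eval z H))
    {N : ℕ} (hN : ∀ i, N ≤ Finsupp.degree i → 0 ≤ f i) {r : σ → ℝ} (hr : ∀ j, 0 ≤ r j)
    (hdisc : ∀ t : ℂ, ‖t‖ < 1 → eval (t • fun j => (r j : ℂ)) H ≠ 0)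
    (hone : eval (fun j => (r j : ℂ)) H ≠ 0) :
    Summable (lineCoeff f r) := by
  set φ : ℝ → ℂ := fun s =>
    eval ((s : ℂ) • fun j => (r j : ℂ)) G / eval ((s : ℂ) • fun j => (r j : ℂ)) H
  obtain ⟨M, hM⟩ : ∃ M, ∀ s ∈ Set.Icc (0 : ℝ) 1, ‖φ s‖ ≤ M := by
    refine isCompact_Icc.exists_bound_of_continuousOn <|
      ((differentiable_eval_smul G _).continuous.comp Complex.continuous_ofReal).continuousOn.div
      ((differentiable_eval_smul H _).continuous.comp Complex.continuous_ofReal).continuousOn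
      fun s hs => ?_
    rcases hs.2.lt_or_eq with hs1 | rfl
    · exact hdisc s (by simpa [abs_of_nonneg hs.1] using hs1)
    · simpa using hone
  refine summable_of_hasSum_mul_pow_le (φ := fun s => (φ s).re) (N := N) (fun n hn => ?_)
    (fun s hs => ?_) fun s hs => (Complex.re_le_norm _).trans (hM s (Set.Ioo_subset_Icc_self hs))
  · refine sum_nonneg fun i hi => mul_nonneg (hN i ?_) (prod_nonneg fun j _ => pow_nonneg (hr j) _)
    rw [mem_finsuppAntidiag] at hi
    rwa [Finsupp.degree_eq_sum, hi.1]
  · have hsum := hasSum_lineCoeff_of_eval_ne_zero hε hconv hdisc (t := s)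
      (by simpa [abs_of_pos hs.1] using hs.2)
    have hcoeff (n : ℕ) : lineCoeff (fun i => (f i : ℂ)) (fun j => (r j : ℂ)) n =
        ((lineCoeff f r n : ℝ) : ℂ) :=
      (map_lineCoeff Complex.ofRealHom f r n).symm
    have hterm (n : ℕ) :
        (((lineCoeff f r n : ℝ) : ℂ) * (s : ℂ) ^ n).re = lineCoeff f r n * s ^ n := by
      rw [← Complex.ofReal_pow, ← Complex.ofReal_mul, Complex.ofReal_re]
    simpa only [hcoeff, hterm] using Complex.hasSum_re hsum

theorem norm_lineCoeff_ofReal_le {f : (σ →₀ ℕ) → ℝ} {n : ℕ}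
    (hf : ∀ i, Finsupp.degree i = n → 0 ≤ f i) (v : σ → ℂ) :
    ‖lineCoeff (fun i => (f i : ℂ)) v n‖ ≤ lineCoeff f (‖v ·‖) n := by
  refine (norm_lineCoeff_le _ v n).trans_eq (sum_congr rfl fun i hi => ?_)
  rw [mem_finsuppAntidiag, ← Finsupp.degree_eq_sum] at hi
  dsimp only
  rw [Complex.norm_real, Real.norm_of_nonneg (hf i hi.1)]

theorem eval_eq_zero_of_summable_norm_lineCoeff {c : (σ →₀ ℕ) → ℂ} (hε : 0 < ε)
    (hconv : ∀ z : σ → ℂ, (∀ j, ‖z j‖ < ε) →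
      HasSum (fun i => c i * ∏ j, z j ^ i j) (eval z G / eval z H))
    {y : σ → ℂ} (hdisc : ∀ t : ℂ, ‖t‖ < 1 → eval (t • y) H ≠ 0) (hyH : eval y H = 0)
    (hsum : Summable fun n => ‖lineCoeff c y n‖) :
    eval y G = 0 := by
  refine eq_zero_of_tendsto_of_norm_div_le (C := ∑' n, ‖lineCoeff c y n‖)
    (tendsto_eval_ofReal_smul G y)
    (hyH ▸ tendsto_eval_ofReal_smul H y) ?_
  filter_upwards [Ioo_mem_nhdsLT zero_lt_one] with s hs
  have hs1 : ‖(s : ℂ)‖ < 1 := by simpa [abs_of_pos hs.1] using hs.2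
  exact ⟨hdisc s hs1, norm_le_tsum_norm_of_hasSum_mul_pow hsum hs1.le
    (hasSum_lineCoeff_of_eval_ne_zero hε hconv hdisc hs1)⟩

end LineRestriction

theorem stmt7_general (d : ℕ) (G H : MvPolynomial (Fin d) ℂ) (hcop : IsCoprime G H)
    (f : (Fin d →₀ ℕ) → ℝ) (ε : ℝ) (hε : 0 < ε)
    (hconv : ∀ z : Fin d → ℂ, (∀ j, ‖z j‖ < ε) →
      HasSum (fun i : Fin d →₀ ℕ => (f i : ℂ) * ∏ j, z j ^ i j)
        (eval z G / eval z H))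
    (hfin : {i | f i < 0}.Finite)
    (y : Fin d → ℂ) (hy0 : ∀ j, y j ≠ 0) (hyH : eval y H = 0)
    (hymin : ¬ ∃ z : Fin d → ℂ, eval z H = 0 ∧
      ∀ j, ‖z j‖ < ‖y j‖) :
    eval (fun j => (‖y j‖ : ℂ)) H = 0 ∧
    ¬ ∃ z : Fin d → ℂ, eval z H = 0 ∧
      ∀ j, ‖z j‖ < ‖((‖y j‖ : ℂ))‖ := by
  refine ⟨?_, by simpa only [Complex.norm_real, norm_norm] using hymin⟩
  by_contra hr
  have hdisc (v : Fin d → ℂ) (hv : ∀ j, ‖v j‖ = ‖y j‖) (t : ℂ) (ht : ‖t‖ < 1) :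
      eval (t • v) H ≠ 0 := fun h => hymin ⟨t • v, h, fun j => by
        simpa [hv] using mul_lt_of_lt_one_left (norm_pos_iff.2 (hy0 j)) ht⟩
  obtain ⟨N, hN⟩ := exists_nonneg_of_le_degree hfin
  have hb : Summable (lineCoeff f (‖y ·‖)) :=
    summable_lineCoeff_of_eval_ne_zero hε hconv hN (fun _ => norm_nonneg _)
      (hdisc _ fun j => by simp) hr
  have ha : Summable fun n => ‖lineCoeff (fun i => (f i : ℂ)) y n‖ := by
    refine hb.of_norm_bounded_eventually_nat ?_
    filter_upwards [eventually_ge_atTop N] with n hn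
    exact (norm_norm _).trans_le
      (norm_lineCoeff_ofReal_le (fun i hi => hN i (hi ▸ hn)) y)
  exact (isCoprime_zero_right.1 (hyH ▸ hcop.map (eval y))).ne_zero
    (eval_eq_zero_of_summable_norm_lineCoeff hε hconv (hdisc y fun _ => rfl) hyH ha)

/-- If F = G/H has a power series expansion at the origin with only finitely
many negative coefficients, and y ∈ (ℂ*)^d is a minimal zero of H, then
(|y₁|,…,|y_d|) is also a zero of H and is also minimal. -/
theorem stmt7 (d : ℕ) (G H : MvPolynomial (Fin d) ℂ) (hcop : IsCoprime G H)
    (h0 : eval 0 H ≠ 0) (f : (Fin d →₀ ℕ) → ℝ) (ε : ℝ) (hε : 0 < ε)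
    (hconv : ∀ z : Fin d → ℂ, (∀ j, ‖z j‖ < ε) →
      HasSum (fun i : Fin d →₀ ℕ => (f i : ℂ) * ∏ j, z j ^ i j)
        (eval z G / eval z H))
    (hfin : {i | f i < 0}.Finite)
    (y : Fin d → ℂ) (hy0 : ∀ j, y j ≠ 0) (hyH : eval y H = 0)
    (hymin : ¬ ∃ z : Fin d → ℂ, eval z H = 0 ∧
      ∀ j, ‖z j‖ < ‖y j‖) :
    eval (fun j => (‖y j‖ : ℂ)) H = 0 ∧
    ¬ ∃ z : Fin d → ℂ, eval z H = 0 ∧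
      ∀ j, ‖z j‖ < ‖((‖y j‖ : ℂ))‖ :=
  stmt7_general d G H hcop f ε hε hconv hfin y hy0 hyH hymin
end

section
/- Let H(x,y) = (1-x-y)(20-x-40y) - 1. The system H(x,y) = 0, x·H_x(x,y) - y·H_y(x,y) = 0 has at least two distinct solutions with positive real coordinates. -/
/-!
Writing `H = x² + 41xy + 40y² - 21x - 60y + 19`, the critical equation `x H_x - y H_y = 0` is
`2x² - 21x - 80y² + 60y = 0` (the `xy` terms cancel), and adding `2H` to it leaves
`4x² + 82xy - 63x - 60y + 38`, which is linear in `y`. Solving it for `y` and substituting into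
`H = 0` gives a quartic in `x`, which changes sign on `[1/2, 3/5]` and on `[9, 10]`; on both
intervals the corresponding `y` is positive.
-/
open MvPolynomial

noncomputable def H8 : MvPolynomial (Fin 2) ℝ :=
  (1 - X 0 - X 1) * (C 20 - X 0 - C 40 * X 1) - 1

def IsCriticalPoint (P : MvPolynomial (Fin 2) ℝ) (w : Fin 2 → ℝ) : Prop :=
  eval w P = 0 ∧ w 0 * eval w (pderiv 0 P) - w 1 * eval w (pderiv 1 P) = 0

namespace H8

theorem eval_eq (w : Fin 2 → ℝ) : eval w H8 = (1 - w 0 - w 1) * (20 - w 0 - 40 * w 1) - 1 := by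
  simp [H8]

theorem critical_expr_eq (w : Fin 2 → ℝ) :
    w 0 * eval w (pderiv 0 H8) - w 1 * eval w (pderiv 1 H8) =
      2 * w 0 ^ 2 - 21 * w 0 - 80 * w 1 ^ 2 + 60 * w 1 := by
  simp only [H8, map_sub, map_add, map_mul, map_neg, map_one, Derivation.leibniz,
    Derivation.map_one_eq_zero, derivation_C, pderiv_X, Pi.single_eq_same, Pi.single_eq_of_ne,
    one_ne_zero, zero_ne_one, ne_eq, not_false_eq_true, smul_eq_mul, eval_X, eval_C, mul_zero,
    add_zero, sub_zero, zero_sub, mul_one, neg_sub, sub_self, mul_neg]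
  ring

def eliminant (x : ℝ) : ℝ :=
  3042 * x ^ 4 - 35061 * x ^ 3 + 49090 * x ^ 2 - 26580 * x + 5320

noncomputable def criticalY (x : ℝ) : ℝ :=
  (4 * x ^ 2 - 63 * x + 38) / (60 - 82 * x)

theorem eval_criticalY {x : ℝ} (hx : 60 - 82 * x ≠ 0) :
    (60 - 82 * x) ^ 2 * eval ![x, criticalY x] H8 = -2 * eliminant x := by
  simp only [eval_eq, Matrix.cons_val_zero, Matrix.cons_val_one, criticalY, eliminant]
  field_simp
  ring

theorem isCriticalPoint_of_eliminant_eq_zero {x : ℝ} (hx : eliminant x = 0)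
    (hy : 0 < criticalY x) : IsCriticalPoint H8 ![x, criticalY x] := by
  -- `criticalY x` would be the junk value `0` if the denominator vanished.
  have hden : 60 - 82 * x ≠ 0 := fun h => hy.ne' (by simp [criticalY, h])
  have hH : eval ![x, criticalY x] H8 = 0 := by
    simpa [hx, hden] using eval_criticalY hden
  refine ⟨hH, ?_⟩
  have hlin : (60 - 82 * x) * criticalY x = 4 * x ^ 2 - 63 * x + 38 := mul_div_cancel₀ _ hden
  rw [critical_expr_eq]
  simp only [eval_eq, Matrix.cons_val_zero, Matrix.cons_val_one] at hH ⊢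
  linear_combination -2 * hH - hlin

theorem continuous_eliminant : Continuous eliminant := by
  unfold eliminant; fun_prop

theorem exists_eliminant_eq_zero_mem_Icc_left : ∃ x ∈ Set.Icc (1/2 : ℝ) (3/5), eliminant x = 0 :=
  intermediate_value_Icc' (by norm_num) continuous_eliminant.continuousOn
    (by constructor <;> norm_num [eliminant])

theorem exists_eliminant_eq_zero_mem_Icc_right : ∃ x ∈ Set.Icc (9 : ℝ) 10, eliminant x = 0 :=
  intermediate_value_Icc (by norm_num) continuous_eliminant.continuousOn
    (by constructor <;> norm_num [eliminant])

theorem criticalY_pos_of_mem_Icc_left {x : ℝ} (hx : x ∈ Set.Icc (1/2 : ℝ) (3/5)) :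
    0 < criticalY x :=
  div_pos (by nlinarith [hx.1, hx.2]) (by linarith [hx.2])

theorem criticalY_pos_of_mem_Icc_right {x : ℝ} (hx : x ∈ Set.Icc (9 : ℝ) 10) :
    0 < criticalY x :=
  div_pos_of_neg_of_neg (by nlinarith [hx.1, hx.2]) (by linarith [hx.1])

end H8

/-- The critical point system for H = (1-x-y)(20-x-40y)-1 in direction (1,1)
has at least two distinct solutions with positive real coordinates. -/
theorem stmt8 :
    ∃ w v : Fin 2 → ℝ, w ≠ v ∧
      (∀ j, 0 < w j) ∧ (∀ j, 0 < v j) ∧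
      eval w H8 = 0 ∧
      w 0 * eval w (pderiv 0 H8) - w 1 * eval w (pderiv 1 H8) = 0 ∧
      eval v H8 = 0 ∧
      v 0 * eval v (pderiv 0 H8) - v 1 * eval v (pderiv 1 H8) = 0 := by
  obtain ⟨a, ha, hqa⟩ := H8.exists_eliminant_eq_zero_mem_Icc_left
  obtain ⟨b, hb, hqb⟩ := H8.exists_eliminant_eq_zero_mem_Icc_right
  have hya := H8.criticalY_pos_of_mem_Icc_left ha
  have hyb := H8.criticalY_pos_of_mem_Icc_right hb
  obtain ⟨hHa, hCa⟩ := H8.isCriticalPoint_of_eliminant_eq_zero hqa hya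
  obtain ⟨hHb, hCb⟩ := H8.isCriticalPoint_of_eliminant_eq_zero hqb hyb
  have hab : a ≠ b := by linarith [ha.2, hb.1]
  refine ⟨![a, H8.criticalY a], ![b, H8.criticalY b], fun h => hab (by simpa using congrFun h 0),
    Fin.forall_fin_two.2 ⟨by simpa using (by linarith [ha.1] : (0 : ℝ) < a), by simpa using hya⟩,
    Fin.forall_fin_two.2 ⟨by simpa using (by linarith [hb.1] : (0 : ℝ) < b), by simpa using hyb⟩,
    hHa, hCa, hHb, hCb⟩
end

section
/- Let H ∈ R[z1,...,zd] with H(0) ≠ 0, and suppose the power series of 1/H at the origin has nonnegative coefficients with positive radius of convergence. If w ∈ R_{>0}^d is a zero of H that is coordinate-wise closest to the origin among positive real zeros along its ray (i.e., H(tw) ≠ 0 for all t ∈ (0,1)), and there is no other zero y of H with |y_j| < w_j for all j, then the power series of 1/H converges at every point z with |z_j| < w_j for all j. -/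
/-!
Fix `z` in the polydisc and a real point `s` with `‖z j‖ < s j < w j`. The one-variable function
`g t = 1 / H(t s)` has no pole on a disc of radius `R > 1`, since a zero there would be a zero of
`H` strictly inside the polydisc of `w`. Near `0`, grouping the nonnegative series `∑ f_i (t s)^i`
by total degree gives the Taylor series of `g`, whose coefficients are the degree-`n` sums of
`f_i s^i`. The Taylor series converges at `t = 1` because `g` is holomorphic on the disc of radius
`R`, so `∑ f_i s^i < ∞`, and this sum dominates the series at `z`.
-/

open MvPolynomial Filter Topology Metric
open scoped NNReal ENNReal

lemma exists_gt_forall_mul_lt {ι : Type*} [Finite ι] {a : ℝ} {s w : ι → ℝ}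
    (h : ∀ j, a * s j < w j) : ∃ R > a, ∀ j, R * s j < w j := by
  have hnhds : ∀ᶠ R in 𝓝 a, ∀ j, R * s j < w j := eventually_all.2 fun j =>
    (continuous_id.mul continuous_const).continuousAt.eventually_lt continuousAt_const (h j)
  obtain ⟨R, hR, hRa⟩ := ((hnhds.filter_mono nhdsWithin_le_nhds).and
    (self_mem_nhdsWithin : Set.Ioi a ∈ 𝓝[>] a)).exists
  exact ⟨R, hRa, hR⟩

lemma Finsupp.prod_mul_pow_eq_pow_degree_mul {σ M : Type*} [Fintype σ] [CommMonoid M]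
    (t : M) (s : σ → M) (i : σ →₀ ℕ) :
    ∏ j, (t * s j) ^ i j = t ^ i.degree * ∏ j, s j ^ i j := by
  simp_rw [mul_pow]
  rw [Finset.prod_mul_distrib, Finset.prod_pow_eq_pow_sum, Finsupp.degree_eq_sum]

lemma Finsupp.summable_of_summable_tsum_degree_eq {σ : Type*} [Finite σ]
    {F : (σ →₀ ℕ) → ℝ} (hF : 0 ≤ F)
    (h : Summable fun n => ∑' i : {i : σ →₀ ℕ | i.degree = n}, F i) : Summable F := by
  refine (summable_partition hF (s := fun n => {i | i.degree = n})
    fun i => ⟨i.degree, rfl, fun _ hn => hn.symm⟩).2 ⟨fun n => ?_, h⟩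
  have := (finite_of_degree_eq (σ := σ) n).to_subtype
  exact .of_finite

lemma MvPolynomial.differentiable_eval_mul {𝕜 σ : Type*} [NontriviallyNormedField 𝕜]
    (P : MvPolynomial σ 𝕜) (s : σ → 𝕜) :
    Differentiable 𝕜 fun t => eval (fun j => t * s j) P := fun t =>
  (AnalyticAt.aeval_mvPolynomial (𝕜 := 𝕜) (z := t) (f := fun t j => t * s j)
    (fun _ => analyticAt_id.mul analyticAt_const) P).differentiableAt

lemma summable_norm_mul_pow_of_hasFPowerSeriesAt_ofScalars {g : ℂ → ℂ} {c : ℕ → ℂ} {R r : ℝ≥0}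
    (hc : HasFPowerSeriesAt g (FormalMultilinearSeries.ofScalars ℂ c) 0)
    (hg : DifferentiableOn ℂ g (ball 0 R)) (hr : r < R) :
    Summable fun n => ‖c n‖ * r ^ n := by
  obtain ⟨ρ, hrρ, hρR⟩ := exists_between hr
  have hball := (hg.mono (closedBall_subset_ball (NNReal.coe_lt_coe.2 hρR))).hasFPowerSeriesOnBall
    (pos_of_gt hrρ)
  have hrad : (r : ℝ≥0∞) < (cauchyPowerSeries g 0 ρ).radius :=
    (ENNReal.coe_lt_coe.2 hrρ).trans_le hball.r_le
  simpa [← hc.eq_formalMultilinearSeries hball.hasFPowerSeriesAt,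
    FormalMultilinearSeries.ofScalars_norm] using
    (cauchyPowerSeries g 0 ρ).summable_norm_mul_pow hrad

theorem Finsupp.summable_of_hasSum_pow_degree {σ : Type*} [Finite σ] {F : (σ →₀ ℕ) → ℝ}
    (hF : 0 ≤ F) {g : ℂ → ℂ} {R : ℝ} (hR : 1 < R) (hg : DifferentiableOn ℂ g (ball 0 R))
    (hsum : ∀ᶠ t in 𝓝 0, HasSum (fun i => (F i : ℂ) * t ^ i.degree) (g t)) :
    Summable F := by
  lift R to ℝ≥0 using by linarith
  set c : ℕ → ℝ := fun n => ∑' i : {i : σ →₀ ℕ | i.degree = n}, F i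
  have hc : HasFPowerSeriesAt g (FormalMultilinearSeries.ofScalars ℂ fun n => (c n : ℂ)) 0 := by
    rw [hasFPowerSeriesAt_iff]
    filter_upwards [hsum] with t ht
    simp only [FormalMultilinearSeries.coeff_ofScalars, zero_add, smul_eq_mul]
    convert ht.tsum_fiberwise degree using 2 with n
    rw [Complex.ofReal_tsum, ← tsum_mul_left]
    refine tsum_congr fun i => ?_
    rw [show degree i.1 = n from i.2]
    ring
  refine summable_of_summable_tsum_degree_eq hF (Summable.of_norm ?_)
  simpa using summable_norm_mul_pow_of_hasFPowerSeriesAt_ofScalars hc hg (r := 1)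
    (by exact_mod_cast hR)

lemma summable_ofReal_mul_prod_pow_of_norm_le {σ : Type*} [Fintype σ] {f : (σ →₀ ℕ) → ℝ}
    (hf : 0 ≤ f) {s : σ → ℝ} {z : σ → ℂ} (hz : ∀ j, ‖z j‖ ≤ s j)
    (h : Summable fun i => f i * ∏ j, s j ^ i j) :
    Summable fun i => (f i : ℂ) * ∏ j, z j ^ i j := by
  refine .of_norm_bounded h fun i => ?_
  rw [norm_mul, Complex.norm_real, Real.norm_of_nonneg (hf i), norm_prod]
  simp_rw [norm_pow]
  gcongr with j
  exacts [hf i, hz j]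

theorem stmt11_general (d : ℕ) (H : MvPolynomial (Fin d) ℝ)
    (f : (Fin d →₀ ℕ) → ℝ) (hf : ∀ i, 0 ≤ f i) (ε : ℝ) (hε : 0 < ε)
    (hconv : ∀ z : Fin d → ℂ, (∀ j, ‖z j‖ < ε) →
      HasSum (fun i : Fin d →₀ ℕ => (f i : ℂ) * ∏ j, z j ^ i j)
        (1 / eval z (map Complex.ofRealHom H)))
    (w : Fin d → ℝ)
    (hmin : ¬ ∃ y : Fin d → ℂ, eval y (map Complex.ofRealHom H) = 0 ∧
      ∀ j, ‖y j‖ < w j) :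
    ∀ z : Fin d → ℂ, (∀ j, ‖z j‖ < w j) →
      Summable (fun i : Fin d →₀ ℕ => (f i : ℂ) * ∏ j, z j ^ i j) := by
  intro z hz
  set s : Fin d → ℝ := fun j => (‖z j‖ + w j) / 2
  have hzs : ∀ j, ‖z j‖ < s j := fun j => by simp only [s]; linarith [hz j]
  have hsw : ∀ j, s j < w j := fun j => by simp only [s]; linarith [hz j]
  have hs0 : ∀ j, 0 < s j := fun j => (norm_nonneg _).trans_lt (hzs j)
  have hscale : ∀ {t : ℂ} {a : ℝ}, t ∈ ball 0 a → ∀ j, ‖t * s j‖ < a * s j := fun ht j => by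
    rw [norm_mul, Complex.norm_real, Real.norm_of_nonneg (hs0 j).le]
    exact mul_lt_mul_of_pos_right (mem_ball_zero_iff.1 ht) (hs0 j)
  obtain ⟨R, hR1, hRw⟩ := exists_gt_forall_mul_lt (a := 1) (by simpa using hsw)
  obtain ⟨δ, hδ, hδε⟩ := exists_gt_forall_mul_lt (a := 0) (s := s) (w := fun _ => ε)
    fun _ => by simpa using hε
  have hP : ∀ t ∈ ball (0 : ℂ) R, eval (fun j => t * s j) (map Complex.ofRealHom H) ≠ 0 :=
    fun t ht hPt => hmin ⟨_, hPt, fun j => (hscale ht j).trans (hRw j)⟩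
  refine summable_ofReal_mul_prod_pow_of_norm_le hf (fun j => (hzs j).le) ?_
  refine Finsupp.summable_of_hasSum_pow_degree (g := fun t => 1 / _)
    (fun i => mul_nonneg (hf i) (Finset.prod_nonneg fun j _ => pow_nonneg (hs0 j).le _)) hR1
    ((differentiableOn_const 1).div (differentiable_eval_mul _ _).differentiableOn hP) ?_
  filter_upwards [ball_mem_nhds (0 : ℂ) hδ] with t ht
  convert hconv (fun j => t * s j) fun j => (hscale ht j).trans (hδε j) using 2 with i
  rw [Finsupp.prod_mul_pow_eq_pow_degree_mul]
  push_cast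
  ring

/-- If 1/H has a nonnegative power series expansion at the origin, w is a
positive real zero of H minimal along its ray and with no zero of H
coordinatewise strictly smaller in modulus, then the series converges on the
open polydisc {z : |z_j| < w_j}. -/
theorem stmt11 (d : ℕ) (H : MvPolynomial (Fin d) ℝ) (h0 : eval 0 H ≠ 0)
    (f : (Fin d →₀ ℕ) → ℝ) (hf : ∀ i, 0 ≤ f i) (ε : ℝ) (hε : 0 < ε)
    (hconv : ∀ z : Fin d → ℂ, (∀ j, ‖z j‖ < ε) →
      HasSum (fun i : Fin d →₀ ℕ => (f i : ℂ) * ∏ j, z j ^ i j)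
        (1 / eval z (map Complex.ofRealHom H)))
    (w : Fin d → ℝ) (hw : ∀ j, 0 < w j) (hwH : eval w H = 0)
    (hray : ∀ t : ℝ, 0 < t → t < 1 → eval (fun j => t * w j) H ≠ 0)
    (hmin : ¬ ∃ y : Fin d → ℂ, eval y (map Complex.ofRealHom H) = 0 ∧
      ∀ j, ‖y j‖ < w j) :
    ∀ z : Fin d → ℂ, (∀ j, ‖z j‖ < w j) →
      Summable (fun i : Fin d →₀ ℕ => (f i : ℂ) * ∏ j, z j ^ i j) :=
  stmt11_general d H f hf ε hε hconv w hmin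
end
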